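/- arXiv:1202.2652 — 4 statements merged into one kernel-verified Lean document; each statement's English description precedes it below -/
import Mathlib

section
/- Let v_1, …, v_d ∈ ℤ^n be linearly independent. A coefficient vector λ ∈ ℝ^d_{>0} with Σ λ_i v_i ∈ ℤ^n is atomic if and only if deg(λ) ≥ level(λ), i.e., if and only if λ_j ≤ 1 for all indices j < level(λ). -/
/-- `Covers mu lam` means `lam ∈ mu + cone_ℤ(e_1, …, e_{level mu})`:
`lam = mu + δ` for a non-negative integer vector `δ` supported on the first
`level mu` coordinates. -/
def Covers {d : ℕ} (mu lam : Fin d → ℝ) : Prop :=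
  ∃ δ : Fin d → ℤ, (∀ i, 0 ≤ δ i) ∧
    (∀ i : Fin d, ⌈∑ j, mu j⌉ < (i : ℕ) + 1 → δ i = 0) ∧
    ∀ i, lam i = mu i + (δ i : ℝ)

/-- The set `T k` of (coefficient vectors of) atomic lattice points at level `k` in the
half-open fundamental simplex of the cone over `v`: all lattice points at level `1`
are in `T 1`, and inductively a lattice point of the half-open fundamental simplex at
level `k` is in `T k` iff it is not covered by an atomic point at a lower level. -/
def T (d n : ℕ) (v : Fin d → Fin n → ℤ) : ℕ → Set (Fin d → ℝ)
  | k =>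
    {lam | (∀ i, 0 < lam i) ∧ (∑ i, lam i ≤ (d : ℝ)) ∧
      (∀ j : Fin n, ∃ z : ℤ, (∑ i, lam i * (v i j : ℝ)) = (z : ℝ)) ∧
      ⌈∑ i, lam i⌉ = (k : ℤ) ∧
      ∀ i, i < k → ∀ mu ∈ T d n v i, ¬ Covers mu lam}

/-!
If `lam` satisfies `deg ≥ level`, a vector `mu` covering it from a lower level can only
subtract integers from coordinates `lam i ≤ 1` without leaving the open cone, so `mu = lam`;
hence `lam` is atomic. Conversely, if `lam j > 1` for some `j + 1 < level lam`, subtract `1`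
from the first coordinate exceeding `1`, which lowers the level by one; iterating until
`deg ≥ level` holds yields an atomic vector at a lower level covering `lam`. Always choosing
the first such coordinate keeps every subtracted index below the final level.
-/

open Finset

variable {d : ℕ}

/-- The paper's condition `deg lam ≥ level lam`. -/
def DegGeLevel (lam : Fin d → ℝ) : Prop :=
  ∀ j : Fin d, ((j : ℕ) + 1 : ℤ) < ⌈∑ i, lam i⌉ → lam j ≤ 1

lemma DegGeLevel.sum_le {lam : Fin d → ℝ} (h : DegGeLevel lam) : ∑ i, lam i ≤ d := by
  by_cases hle : ∀ j, lam j ≤ 1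
  · calc ∑ i, lam i ≤ ∑ _i : Fin d, (1 : ℝ) := sum_le_sum fun i _ => hle i
      _ = d := by simp
  · obtain ⟨j, hj⟩ := not_forall.1 hle
    rw [not_le] at hj
    have hceil : ⌈∑ i, lam i⌉ ≤ (j : ℕ) + 1 := not_lt.1 fun hlt => (h j hlt).not_gt hj
    have hjd := j.isLt
    calc ∑ i, lam i ≤ ⌈∑ i, lam i⌉ := Int.le_ceil _
      _ ≤ d := by exact_mod_cast hceil.trans (by omega)

lemma Covers.refl (lam : Fin d → ℝ) : Covers lam lam :=
  ⟨0, fun _ => le_rfl, fun _ _ => rfl, fun _ => by simp⟩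

lemma Covers.add_single {mu lam : Fin d → ℝ} (h : Covers mu lam) {j : Fin d}
    (hj : ((j : ℕ) + 1 : ℤ) ≤ ⌈∑ i, mu i⌉) : Covers mu (lam + Pi.single j 1) := by
  obtain ⟨δ, hδ0, hδsupp, hlam⟩ := h
  refine ⟨δ + Pi.single j 1, fun i => ?_, fun i hi => ?_, fun i => ?_⟩
  · rcases eq_or_ne i j with rfl | hij
    · simpa using (hδ0 i).trans (Int.le_add_one le_rfl)
    · simpa [hij] using hδ0 i
  · have hij : i ≠ j := by rintro rfl; omega
    simp [hδsupp i hi, hij]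
  · rcases eq_or_ne i j with rfl | hij
    · simp [hlam, add_assoc]
    · simp [hlam, hij]

lemma Covers.eq_of_le_one {mu lam : Fin d → ℝ} (h : Covers mu lam) (hmu : ∀ i, 0 < mu i)
    (hle : ∀ i : Fin d, ((i : ℕ) + 1 : ℤ) ≤ ⌈∑ j, mu j⌉ → lam i ≤ 1) : mu = lam := by
  obtain ⟨δ, hδ0, hδsupp, hlam⟩ := h
  funext i
  suffices δ i = 0 by simp [hlam, this]
  by_cases hi : ⌈∑ j, mu j⌉ < (i : ℕ) + 1
  · exact hδsupp i hi
  · have hlt : (δ i : ℝ) < 1 := by linarith [hle i (not_lt.1 hi), hlam i, hmu i]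
    have := hδ0 i
    have : δ i < 1 := by exact_mod_cast hlt
    omega

lemma Covers.lattice {n : ℕ} {v : Fin d → Fin n → ℤ} {mu lam : Fin d → ℝ}
    (h : Covers mu lam) (hlat : ∀ j : Fin n, ∃ z : ℤ, ∑ i, lam i * (v i j : ℝ) = z) :
    ∀ j : Fin n, ∃ z : ℤ, ∑ i, mu i * (v i j : ℝ) = z := by
  obtain ⟨δ, -, -, hlam⟩ := h
  intro j
  obtain ⟨z, hz⟩ := hlat j
  refine ⟨z - ∑ i, δ i * v i j, ?_⟩
  push_cast
  rw [← hz, ← sum_sub_distrib]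
  exact sum_congr rfl fun i _ => by rw [hlam i]; ring

lemma mem_T_of_degGeLevel {n : ℕ} (v : Fin d → Fin n → ℤ) {lam : Fin d → ℝ}
    (hpos : ∀ i, 0 < lam i) (hlat : ∀ j : Fin n, ∃ z : ℤ, ∑ i, lam i * (v i j : ℝ) = z)
    {k : ℕ} (hk : ⌈∑ i, lam i⌉ = k) (hdeg : DegGeLevel lam) : lam ∈ T d n v k := by
  rw [T]
  refine ⟨hpos, hdeg.sum_le, hlat, hk, fun i hi mu hmu hcov => ?_⟩
  rw [T] at hmu
  obtain ⟨hmupos, -, -, hmuceil, -⟩ := hmu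
  have hmu_eq : mu = lam := hcov.eq_of_le_one hmupos fun i' hi' =>
    hdeg i' (by rw [hmuceil] at hi'; omega)
  rw [hmu_eq, hk] at hmuceil
  omega

lemma ceil_sum_sub_single (lam : Fin d → ℝ) (j : Fin d) :
    ⌈∑ i, (lam - Pi.single j 1 : Fin d → ℝ) i⌉ = ⌈∑ i, lam i⌉ - 1 := by
  simp [sum_sub_distrib, Int.ceil_sub_one]

lemma exists_covers_degGeLevel (k : ℕ) (lam : Fin d → ℝ) (hpos : ∀ i, 0 < lam i)
    (hk : ⌈∑ i, lam i⌉ = k) (hdeg : ¬ DegGeLevel lam) :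
    ∃ mu, (∀ i, 0 < mu i) ∧ DegGeLevel mu ∧ ⌈∑ i, mu i⌉ < ⌈∑ i, lam i⌉ ∧ Covers mu lam := by
  induction k generalizing lam with
  | zero => exact absurd (fun j hj => by omega) hdeg
  | succ k ih =>
    obtain ⟨j₀, hj₀, hlt₀⟩ : ∃ j : Fin d, ((j : ℕ) + 1 : ℤ) < ⌈∑ i, lam i⌉ ∧ 1 < lam j := by
      simpa [DegGeLevel] using hdeg
    obtain ⟨j, hj, hjmin⟩ := wellFounded_lt.has_min {j | 1 < lam j} ⟨j₀, hlt₀⟩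
    have hjj₀ : (j : ℕ) ≤ j₀ := not_lt.1 fun h => hjmin j₀ hlt₀ h
    set lam' := lam - Pi.single j 1 with hlam'
    have hpos' : ∀ i, 0 < lam' i := fun i => by
      rcases eq_or_ne i j with rfl | hij
      · simpa [hlam'] using hj
      · simpa [hlam', hij] using hpos i
    have hk' : ⌈∑ i, lam' i⌉ = k := by rw [ceil_sum_sub_single, hk]; omega
    obtain ⟨mu, hmupos, hmudeg, hmuceil, hcov, hjmu⟩ : ∃ mu, (∀ i, 0 < mu i) ∧ DegGeLevel mu ∧
        ⌈∑ i, mu i⌉ ≤ k ∧ Covers mu lam' ∧ ((j : ℕ) + 1 : ℤ) ≤ ⌈∑ i, mu i⌉ := by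
      by_cases hdeg' : DegGeLevel lam'
      · exact ⟨lam', hpos', hdeg', hk'.le, Covers.refl lam', by omega⟩
      obtain ⟨mu, hmupos, hmudeg, hmuceil, hcov⟩ := ih lam' hpos' hk' hdeg'
      refine ⟨mu, hmupos, hmudeg, by omega, hcov, not_lt.1 fun hlt => ?_⟩
      -- otherwise `mu` only moves coordinates before `j`, where `lam' = lam ≤ 1`
      have hmu_eq : mu = lam' := hcov.eq_of_le_one hmupos fun i hi => by
        have hij : i < j := by rw [Fin.lt_def]; omega
        simpa [hlam', hij.ne] using not_lt.1 (hjmin i · hij)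
      rw [hmu_eq] at hmuceil
      exact hmuceil.false
    exact ⟨mu, hmupos, hmudeg, by omega, by simpa [hlam'] using hcov.add_single hjmu⟩

lemma degGeLevel_of_mem_T {n : ℕ} {v : Fin d → Fin n → ℤ} {lam : Fin d → ℝ} {k : ℕ}
    (hmem : lam ∈ T d n v k) : DegGeLevel lam := by
  rw [T] at hmem
  obtain ⟨hpos, -, hlat, hk, hblock⟩ := hmem
  by_contra hdeg
  obtain ⟨mu, hmupos, hmudeg, hmuceil, hcov⟩ := exists_covers_degGeLevel k lam hpos hk hdeg
  have hmu0 : 0 ≤ ⌈∑ i, mu i⌉ :=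
    Int.ceil_nonneg (sum_nonneg fun i _ => (hmupos i).le)
  exact hblock _ (by omega) mu
    (mem_T_of_degGeLevel v hmupos (hcov.lattice hlat) (Int.toNat_of_nonneg hmu0).symm hmudeg) hcov

theorem atomic_iff_deg_ge_level_general (d n : ℕ) (v : Fin d → Fin n → ℤ)
    (lam : Fin d → ℝ) (hpos : ∀ i, 0 < lam i)
    (hlat : ∀ j : Fin n, ∃ z : ℤ, (∑ i, lam i * (v i j : ℝ)) = (z : ℝ)) :
    (∃ k, lam ∈ T d n v k) ↔
      ∀ j : Fin d, ((j : ℕ) + 1 : ℤ) < ⌈∑ i, lam i⌉ → lam j ≤ 1 := by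
  refine ⟨fun ⟨k, hmem⟩ => degGeLevel_of_mem_T hmem, fun hdeg => ?_⟩
  have hceil : 0 ≤ ⌈∑ i, lam i⌉ := Int.ceil_nonneg (sum_nonneg fun i _ => (hpos i).le)
  exact ⟨_, mem_T_of_degGeLevel v hpos hlat (Int.toNat_of_nonneg hceil).symm hdeg⟩

/-- Characterization of atomicity: a coefficient vector `lam ∈ ℝ^d_{>0}` of a lattice
point in the open cone over linearly independent `v 0, …, v (d-1) ∈ ℤ^n` is atomic
(i.e. lies in some `T k`) if and only if `lam j ≤ 1` for all indices `j` preceding the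
level of `lam`, i.e. iff `deg lam ≥ level lam`. -/
theorem atomic_iff_deg_ge_level (d n : ℕ) (v : Fin d → Fin n → ℤ)
    (hv : LinearIndependent ℝ fun i => fun j => ((v i j : ℝ)))
    (lam : Fin d → ℝ) (hpos : ∀ i, 0 < lam i)
    (hlat : ∀ j : Fin n, ∃ z : ℤ, (∑ i, lam i * (v i j : ℝ)) = (z : ℝ)) :
    (∃ k, lam ∈ T d n v k) ↔
      ∀ j : Fin d, ((j : ℕ) + 1 : ℤ) < ⌈∑ i, lam i⌉ → lam j ≤ 1 :=
  atomic_iff_deg_ge_level_general d n v lam hpos hlat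
end

section
/- Let v_1, …, v_d ∈ ℤ^n be linearly independent and λ ∈ ℝ^d_{>0} with Σ λ_i v_i ∈ ℤ^n. If deg(λ) < level(λ), then there exists an atomic μ ∈ ℝ^d_{>0} with μ ≠ λ, Σ μ_i v_i ∈ ℤ^n, and λ ∈ μ + cone_ℤ(e_1, …, e_{level(μ)}), where the e_i are standard unit vectors of ℝ^d. -/
/-!
Let `L` be the level of `λ`. Going through the coordinates from the left, lower each `λ_i` by
`⌈λ_i⌉ - 1`, the largest integer that keeps it positive (it then lies in `(0, 1]`), and stop at
the first index `t` where this would push the level below `t`; there subtract only what brings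
the level to exactly `t`. Every coordinate before `t` of the result `μ` is at most `1`, so `μ` is
atomic, `λ - μ` is an integer vector supported on the first `t` coordinates, and `∑ μ_i v_i`
stays integral. Finally `μ ≠ λ`: otherwise the level stays `L = t`, and the index `j < L` with
`λ_j > 1` would have been lowered by `⌈λ_j⌉ - 1 > 0`.
-/

/-- A coefficient vector `mu ∈ ℝ^d_{>0}` (of a lattice point) is atomic iff
`mu j ≤ 1` for all indices `j` preceding its level `⌈∑ i, mu i⌉`. -/
def AtomicCoeff {d : ℕ} (mu : Fin d → ℝ) : Prop :=
  ∀ j : Fin d, ((j : ℕ) + 1 : ℤ) < ⌈∑ i, mu i⌉ → mu j ≤ 1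

theorem Int.ceil_sum_le_sum_ceil {ι R : Type*} [Ring R] [LinearOrder R] [IsStrictOrderedRing R]
    [FloorRing R] (s : Finset ι) (f : ι → R) : ⌈∑ i ∈ s, f i⌉ ≤ ∑ i ∈ s, ⌈f i⌉ :=
  Int.ceil_le.mpr <| by push_cast; exact Finset.sum_le_sum fun i _ => Int.le_ceil (f i)

theorem exists_sum_sub_intCast_mul_eq_intCast {ι : Type*} [Fintype ι] {a : ι → ℝ} {b : ι → ℤ}
    {z : ℤ} (h : ∑ i, a i * b i = z) (δ : ι → ℤ) : ∃ z' : ℤ, ∑ i, (a i - δ i) * b i = z' :=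
  ⟨z - ∑ i, δ i * b i, by simp only [sub_mul, Finset.sum_sub_distrib, h]; push_cast; rfl⟩

theorem exists_greedy_decrement {d : ℕ} (m : Fin d → ℤ) (hm : ∀ i, 0 ≤ m i) (L : ℤ)
    (hL_pos : 1 ≤ L) (hL_le : L ≤ ∑ i, m i + d) :
    ∃ t : Fin d, ∃ δ : Fin d → ℤ, (∀ i, 0 ≤ δ i ∧ δ i ≤ m i) ∧ (∀ i < t, δ i = m i) ∧
      (∀ i, t < i → δ i = 0) ∧ L - ∑ i, δ i = t + 1 := by
  induction d generalizing L with
  | zero => simp at hL_le; omega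
  | succ d ih =>
    by_cases hfirst : L ≤ m 0 + 1
    · refine ⟨0, Fin.cons (L - 1) 0, fun i => ?_, fun i hi => absurd hi (Fin.not_lt_zero i),
        fun i hi => ?_, by simp [Fin.sum_univ_succ]⟩
      · cases i using Fin.cases with
        | zero => simp; omega
        | succ j => simpa using hm j.succ
      · cases i using Fin.cases with
        | zero => exact absurd hi (lt_irrefl 0)
        | succ j => simp
    · rw [Fin.sum_univ_succ] at hL_le
      obtain ⟨t, δ, hδ, hlt, hgt, hsum⟩ :=
        ih (fun i => m i.succ) (fun i => hm i.succ) (L - m 0 - 1) (by omega)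
          (by push_cast at hL_le; omega)
      refine ⟨t.succ, Fin.cons (m 0) δ, fun i => ?_, fun i hi => ?_, fun i hi => ?_, ?_⟩
      · cases i using Fin.cases with
        | zero => simpa using hm 0
        | succ j => simpa using hδ j
      · cases i using Fin.cases with
        | zero => rfl
        | succ j => simpa using hlt j (Fin.succ_lt_succ_iff.mp hi)
      · cases i using Fin.cases with
        | zero => exact absurd hi (Fin.not_lt_zero _)
        | succ j => simpa using hgt j (Fin.succ_lt_succ_iff.mp hi)
      · simp only [Fin.sum_univ_succ, Fin.cons_zero, Fin.cons_succ, Fin.val_succ]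
        push_cast
        omega

theorem exists_atomic_below_general (d n : ℕ) (v : Fin d → Fin n → ℤ)
    (lam : Fin d → ℝ) (hpos : ∀ i, 0 < lam i)
    (hlat : ∀ j : Fin n, ∃ z : ℤ, (∑ i, lam i * (v i j : ℝ)) = (z : ℝ))
    (hdeg : ∃ j : Fin d, 1 < lam j ∧ ((j : ℕ) + 1 : ℤ) < ⌈∑ i, lam i⌉) :
    ∃ mu : Fin d → ℝ, mu ≠ lam ∧ (∀ i, 0 < mu i) ∧
      (∀ j : Fin n, ∃ z : ℤ, (∑ i, mu i * (v i j : ℝ)) = (z : ℝ)) ∧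
      AtomicCoeff mu ∧
      ∃ δ : Fin d → ℤ, (∀ i, 0 ≤ δ i) ∧
        (∀ i : Fin d, ⌈∑ j, mu j⌉ < (i : ℕ) + 1 → δ i = 0) ∧
        ∀ i, lam i = mu i + (δ i : ℝ) := by
  obtain ⟨j₀, hj₀, hj₀_level⟩ := hdeg
  have hceil : ∀ i, 0 ≤ ⌈lam i⌉ - 1 := fun i => by have := Int.ceil_pos.mpr (hpos i); omega
  obtain ⟨t, δ, hδ, hδ_lt, hδ_gt, hδ_sum⟩ := exists_greedy_decrement (fun i => ⌈lam i⌉ - 1) hceil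
    ⌈∑ i, lam i⌉ (by omega) (by
      simpa [Finset.sum_sub_distrib] using Int.ceil_sum_le_sum_ceil Finset.univ lam)
  have hlevel : ⌈∑ i, (lam i - δ i)⌉ = t + 1 := by
    rw [Finset.sum_sub_distrib, ← Int.cast_sum, Int.ceil_sub_intCast, hδ_sum]
  have hδ_ne : δ ≠ 0 := by
    intro hδ_zero
    simp only [hδ_zero, Pi.zero_apply, Finset.sum_const_zero, sub_zero] at hδ_sum hδ_lt
    have := hδ_lt j₀ (by rw [Fin.lt_def]; omega)
    have := Int.lt_ceil.mpr (by exact_mod_cast hj₀ : ((1 : ℤ) : ℝ) < lam j₀)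
    omega
  refine ⟨fun i => lam i - δ i, fun h => hδ_ne ?_, fun i => ?_,
    fun j => exists_sum_sub_intCast_mul_eq_intCast (hlat j).choose_spec δ, fun j hj => ?_,
    δ, fun i => (hδ i).1, fun i hi => hδ_gt i ?_, fun i => by ring⟩
  · funext i; exact_mod_cast sub_eq_self.mp (congrFun h i)
  · have := Int.ceil_lt_add_one (lam i)
    have : (δ i : ℝ) ≤ ⌈lam i⌉ - 1 := by exact_mod_cast (hδ i).2
    linarith
  · rw [hlevel] at hj
    have : (δ j : ℝ) = ⌈lam j⌉ - 1 := by exact_mod_cast hδ_lt j (by rw [Fin.lt_def]; omega)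
    have := Int.le_ceil (lam j)
    linarith
  · rw [hlevel] at hi; rw [Fin.lt_def]; omega

/-- Let `v 0, …, v (d-1) ∈ ℤ^n` be linearly independent and `lam ∈ ℝ^d_{>0}` with
`∑ i, lam i • v i` a lattice point.  If `deg lam < level lam` (i.e. some coordinate
`lam j > 1` with index `j` preceding the level of `lam`), then there is an atomic
`mu ≠ lam`, all of whose coordinates are positive, with `∑ i, mu i • v i` a lattice
point and `lam ∈ mu + cone_ℤ(e_1, …, e_{level mu})`. -/
theorem exists_atomic_below (d n : ℕ) (v : Fin d → Fin n → ℤ)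
    (hv : LinearIndependent ℝ fun i => fun j => ((v i j : ℝ)))
    (lam : Fin d → ℝ) (hpos : ∀ i, 0 < lam i)
    (hlat : ∀ j : Fin n, ∃ z : ℤ, (∑ i, lam i * (v i j : ℝ)) = (z : ℝ))
    (hdeg : ∃ j : Fin d, 1 < lam j ∧ ((j : ℕ) + 1 : ℤ) < ⌈∑ i, lam i⌉) :
    ∃ mu : Fin d → ℝ, mu ≠ lam ∧ (∀ i, 0 < mu i) ∧
      (∀ j : Fin n, ∃ z : ℤ, (∑ i, mu i * (v i j : ℝ)) = (z : ℝ)) ∧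
      AtomicCoeff mu ∧
      ∃ δ : Fin d → ℤ, (∀ i, 0 ≤ δ i) ∧
        (∀ i : Fin d, ⌈∑ j, mu j⌉ < (i : ℕ) + 1 → δ i = 0) ∧
        ∀ i, lam i = mu i + (δ i : ℝ) :=
  exists_atomic_below_general d n v lam hpos hlat hdeg
end

section
/- Let v_1, …, v_d ∈ ℤ^n be linearly independent. If level(λ) > d for a coefficient vector λ ∈ ℝ^d_{>0} of a lattice point, then λ is not atomic; consequently, the number of atomic lattice points in the open cone over v_1, …, v_d is finite. -/
lemma atomic_sum_le {d : ℕ} (lam : Fin d → ℝ) (hpos : ∀ i, 0 < lam i)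
    (ha : AtomicCoeff lam) : ∑ i, lam i ≤ d := by
  by_contra h
  push_neg at h
  have hceil : (d : ℤ) < ⌈∑ i, lam i⌉ := by
    rw [Int.lt_ceil]; exact_mod_cast h
  have hle : ∀ j : Fin d, lam j ≤ 1 := fun j => ha j (by
    have : ((j : ℕ) + 1 : ℤ) ≤ d := by exact_mod_cast j.2
    omega)
  have hs : ∑ i, lam i ≤ ∑ _i : Fin d, (1 : ℝ) :=
    Finset.sum_le_sum fun i _ => hle i
  simp at hs
  linarith

/-- If the level of a positive coefficient vector `lam` of a lattice point exceeds `d`,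
then `lam` is not atomic; consequently, the set of atomic lattice points in the open
cone over linearly independent `v 0, …, v (d-1) ∈ ℤ^n` is finite. -/
theorem atomic_level_le_d_and_finite (d n : ℕ) (v : Fin d → Fin n → ℤ)
    (hv : LinearIndependent ℝ fun i => fun j => ((v i j : ℝ))) :
    (∀ lam : Fin d → ℝ, (∀ i, 0 < lam i) →
      (∀ j : Fin n, ∃ z : ℤ, (∑ i, lam i * (v i j : ℝ)) = (z : ℝ)) →
      (d : ℤ) < ⌈∑ i, lam i⌉ → ¬ AtomicCoeff lam) ∧
    Set.Finite {z : Fin n → ℤ | ∃ lam : Fin d → ℝ, (∀ i, 0 < lam i) ∧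
      (∀ j : Fin n, (z j : ℝ) = ∑ i, lam i * (v i j : ℝ)) ∧ AtomicCoeff lam} := by
  constructor
  · intro lam hpos _ hlvl ha
    have h := atomic_sum_le lam hpos ha
    have : ⌈∑ i, lam i⌉ ≤ (d : ℤ) := Int.ceil_le.mpr (by exact_mod_cast h)
    omega
  · set C : ℤ := d * ∑ i, ∑ j, |v i j| with hC
    apply Set.Finite.subset (Set.Finite.pi fun _ : Fin n => Set.finite_Icc (-C) C)
    rintro z ⟨lam, hpos, hz, ha⟩
    have hsum := atomic_sum_le lam hpos ha
    have hlam : ∀ i, lam i ≤ d := by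
      intro i
      calc lam i ≤ ∑ k, lam k :=
            Finset.single_le_sum (fun k _ => (hpos k).le) (Finset.mem_univ i)
        _ ≤ d := hsum
    intro j _
    simp only [Set.mem_Icc]
    have habs : |(z j : ℝ)| ≤ (C : ℝ) := by
      rw [hz j]
      calc |∑ i, lam i * (v i j : ℝ)| ≤ ∑ i, |lam i * (v i j : ℝ)| :=
            Finset.abs_sum_le_sum_abs _ _
        _ = ∑ i, lam i * |(v i j : ℝ)| := by
            refine Finset.sum_congr rfl fun i _ => ?_
            rw [abs_mul, abs_of_pos (hpos i)]
        _ ≤ ∑ i, (d : ℝ) * |(v i j : ℝ)| :=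
            Finset.sum_le_sum fun i _ =>
              mul_le_mul_of_nonneg_right (hlam i) (abs_nonneg _)
        _ ≤ ∑ i, (d : ℝ) * ∑ j', |(v i j' : ℝ)| := by
            refine Finset.sum_le_sum fun i _ =>
              mul_le_mul_of_nonneg_left ?_ (by positivity)
            exact Finset.single_le_sum (f := fun j' => |(v i j' : ℝ)|) (fun k _ => abs_nonneg _) (Finset.mem_univ j)
        _ = (C : ℝ) := by rw [hC, Finset.mul_sum]; push_cast; ring
    have habs' : |z j| ≤ C := by
      have : ((|z j| : ℤ) : ℝ) ≤ (C : ℝ) := by rwa [Int.cast_abs]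
      exact_mod_cast this
    exact abs_le.mp habs'
end

section
/- Let Δ ⊂ ℝ^n be the relative interior of a d-dimensional lattice simplex with vertices v_1, …, v_{d+1}, let a_i = (v_i, 1) ∈ ℤ^{n+1}, and let C = cone_ℝ(a_1, …, a_{d+1}). Then for any d' ≥ d and all integers i with 0 ≤ i ≤ d', the f*-coefficient f*_i of the Ehrhart polynomial L_Δ (with respect to degree d') equals the number of atomic lattice points in the half-open fundamental simplex of C at level i+1. In particular f*_i = 0 for i > d. -/
open Polynomial

/-- The polynomial `binomial (k-1) i` in the variable `k`. -/
noncomputable def binomDesc (i : ℕ) : Polynomial ℚ :=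
  C ((i.factorial : ℚ)⁻¹) * ∏ j ∈ Finset.range i, (X - C ((j : ℚ) + 1))

open Finset

/-!
A lattice point of `kΔ` has unique positive barycentric coordinates `λ` with `∑ λ = k`. Peeling
off integer parts greedily from the first coordinate on (`λ_t ↦ λ_t - (⌈λ_t⌉ - 1)` for as long as
the total allows, then whatever is left at one more coordinate) writes `λ = μ + m` uniquely, with
`μ` the coordinates of an atomic point at some level `ℓ ≤ d + 1` and `m ∈ ℕ^ℓ` with
`∑ m = k - ℓ`. There are `binomial (k - 1) (ℓ - 1)` such `m`, so
`L_Δ(k) = ∑ᵢ #(atomic points at level i + 1) * binomial (k - 1) i`, and the coefficients of a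
function in the basis `binomial (k - 1) i` are unique.
-/

theorem Finset.card_piAntidiag_nat {ι : Type*} [DecidableEq ι] (s : Finset ι) (n : ℕ) :
    #(piAntidiag s n) = (#s + n - 1).choose n := by
  rw [← card_finsuppAntidiag_nat_eq_choose, finsuppAntidiag, card_map, card_attach]

theorem Set.ncard_setOf_exists_eq {α β γ : Type*} {f : α → γ} {g : β → γ} {P : Set β}
    (hf : Function.Injective f) (hg : Set.InjOn g P) :
    {a | ∃ b ∈ P, f a = g b}.ncard = {b | b ∈ P ∧ ∃ a, f a = g b}.ncard := by
  have : f '' {a | ∃ b ∈ P, f a = g b} = g '' {b | b ∈ P ∧ ∃ a, f a = g b} := by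
    ext y
    constructor
    · rintro ⟨a, ⟨b, hb, hab⟩, rfl⟩
      exact ⟨b, ⟨hb, a, hab⟩, hab.symm⟩
    · rintro ⟨b, ⟨hb, a, hab⟩, rfl⟩
      exact ⟨a, ⟨b, hb, hab⟩, hab⟩
  rw [← Set.ncard_image_of_injective _ hf, this, (hg.mono fun _ hb => hb.1).ncard_image]

theorem eq_of_forall_sum_mul_choose_eq {R : Type*} [Ring R] {M : ℕ} {a b : ℕ → R}
    (h : ∀ K : ℕ, ∑ i ∈ range M, a i * K.choose i = ∑ i ∈ range M, b i * K.choose i) :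
    ∀ i < M, a i = b i := by
  intro i
  induction i using Nat.strong_induction_on with
  | _ i ih =>
    intro hi
    -- at `K = i` the terms `j > i` vanish and the terms `j < i` cancel by induction
    have hK := h i
    rw [← sub_eq_zero, ← sum_sub_distrib, sum_eq_single i] at hK
    · simpa [sub_eq_zero] using hK
    · intro j hj hji
      rcases lt_or_gt_of_ne hji with hlt | hgt
      · rw [ih j hlt (by rw [mem_range] at hj; omega), sub_self]
      · simp [Nat.choose_eq_zero_of_lt hgt]
    · exact fun hi' => absurd (mem_range.2 hi) hi'

theorem eval_binomDesc_natCast_succ (i K : ℕ) :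
    (binomDesc i).eval ((K + 1 : ℕ) : ℚ) = K.choose i := by
  rw [Nat.cast_choose_eq_descPochhammer_div, descPochhammer_eval_eq_prod_range, binomDesc,
    eval_mul, eval_C, eval_prod, div_eq_inv_mul]
  congr 1
  refine prod_congr rfl fun j _ => ?_
  simp only [eval_sub, eval_X, eval_C]
  push_cast
  ring

namespace LatticeSimplex

section Split

variable {N : ℕ}

/-- `m` is what must be subtracted from a coefficient vector with coordinatewise ceilings `c` and
sum `k` to leave an atomic vector at level `ℓ` (see `isAtomicSplit_ceil_iff`). -/
structure IsAtomicSplit (c : Fin N → ℕ) (k ℓ : ℕ) (m : Fin N → ℕ) : Prop where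
  lt : ∀ t, m t < c t
  succ_eq : ∀ t : Fin N, (t : ℕ) + 1 < ℓ → m t + 1 = c t
  eq_zero : ∀ t : Fin N, ℓ ≤ t → m t = 0
  sum_add : ∑ t, m t + ℓ = k

variable {c : Fin N → ℕ} {k ℓ ℓ₁ ℓ₂ : ℕ} {m₁ m₂ : Fin N → ℕ}

theorem IsAtomicSplit.le_of_lt {k₁ k₂ : ℕ} (h₁ : IsAtomicSplit c k₁ ℓ₁ m₁)
    (h₂ : IsAtomicSplit c k₂ ℓ₂ m₂) (hℓ : ℓ₁ < ℓ₂) : m₁ ≤ m₂ := by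
  intro t
  show m₁ t ≤ m₂ t
  rcases lt_trichotomy ((t : ℕ) + 1) ℓ₁ with h | h | h
  · have := h₁.succ_eq t h
    have := h₂.succ_eq t (by omega)
    omega
  · have := h₁.lt t
    have := h₂.succ_eq t (by omega)
    omega
  · have := h₁.eq_zero t (by omega)
    omega

theorem IsAtomicSplit.level_eq (h₁ : IsAtomicSplit c k ℓ₁ m₁) (h₂ : IsAtomicSplit c k ℓ₂ m₂) :
    ℓ₁ = ℓ₂ := by
  by_contra hne
  wlog hlt : ℓ₁ < ℓ₂ generalizing ℓ₁ ℓ₂ m₁ m₂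
  · exact this h₂ h₁ (Ne.symm hne) (by omega)
  have := sum_le_sum fun t (_ : t ∈ univ) => h₁.le_of_lt h₂ hlt t
  have := h₁.sum_add
  have := h₂.sum_add
  omega

theorem IsAtomicSplit.eq (h₁ : IsAtomicSplit c k ℓ m₁) (h₂ : IsAtomicSplit c k ℓ m₂) :
    m₁ = m₂ := by
  have hne (t : Fin N) (ht : (t : ℕ) + 1 ≠ ℓ) : m₁ t = m₂ t := by
    rcases lt_or_gt_of_ne ht with h | h
    · have := h₁.succ_eq t h
      have := h₂.succ_eq t h
      omega
    · rw [h₁.eq_zero t (by omega), h₂.eq_zero t (by omega)]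
  funext t
  by_cases ht : (t : ℕ) + 1 = ℓ
  · have hrest : ∑ s ∈ univ.erase t, m₁ s = ∑ s ∈ univ.erase t, m₂ s :=
      sum_congr rfl fun s hs => hne s fun h => ne_of_mem_erase hs (Fin.ext (by omega))
    have := add_sum_erase univ m₁ (mem_univ t)
    have := add_sum_erase univ m₂ (mem_univ t)
    have := h₁.sum_add
    have := h₂.sum_add
    omega
  · exact hne t ht

theorem exists_isAtomicSplit : ∀ {N : ℕ} (c : Fin N → ℕ), (∀ t, 0 < c t) →
    ∀ {k : ℕ}, 0 < k → k ≤ ∑ t, c t → ∃ (i : Fin N) (m : Fin N → ℕ), IsAtomicSplit c k (i + 1) m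
  | 0, _, _, _, hk, hkc => by simp only [univ_eq_empty, sum_empty] at hkc; omega
  | N + 1, c, hc, k, hk, hkc => by
    rw [Fin.sum_univ_succ] at hkc
    by_cases hk₀ : k ≤ c 0
    · refine ⟨0, Fin.cons (k - 1) 0, ⟨?_, ?_, ?_, ?_⟩⟩ <;>
        simp only [Fin.forall_fin_succ, Fin.cons_zero, Fin.cons_succ, Fin.sum_univ_succ,
          Fin.val_zero, Fin.val_succ, Pi.zero_apply, sum_const_zero]
      · exact ⟨by omega, fun t => hc t.succ⟩
      · exact ⟨by omega, fun t ht => by omega⟩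
      · exact ⟨by omega, fun _ _ => trivial⟩
      · omega
    · obtain ⟨i, m, hm⟩ := exists_isAtomicSplit (Fin.tail c) (fun t => hc t.succ) (k := k - c 0)
        (by omega) (by simp only [Fin.tail]; omega)
      have := hm.sum_add
      have := hc 0
      refine ⟨i.succ, Fin.cons (c 0 - 1) m, ⟨?_, ?_, ?_, ?_⟩⟩ <;>
        simp only [Fin.forall_fin_succ, Fin.cons_zero, Fin.cons_succ, Fin.sum_univ_succ,
          Fin.val_zero, Fin.val_succ]
      · exact ⟨by omega, hm.lt⟩
      · exact ⟨fun _ => by omega, fun t ht => hm.succ_eq t (by omega)⟩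
      · exact ⟨fun _ => by omega, fun t ht => hm.eq_zero t (by omega)⟩
      · omega

end Split

section Atomic

variable {N : ℕ}

/-- Index `t : Fin N` is the paper's `j = t + 1`, so `t + 1 < ℓ` reads `j < ℓ`. -/
def IsAtomic (ℓ : ℕ) (μ : Fin N → ℝ) : Prop :=
  (∀ t, 0 < μ t) ∧ ∑ t, μ t = ℓ ∧ ∀ t : Fin N, (t : ℕ) + 1 < ℓ → μ t ≤ 1

theorem IsAtomic.level_le {ℓ : ℕ} {μ : Fin N → ℝ} (h : IsAtomic ℓ μ) : ℓ ≤ N := by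
  by_contra! hN
  have : ∑ t, μ t ≤ ∑ _t : Fin N, (1 : ℝ) := sum_le_sum fun t _ => h.2.2 t (by omega)
  rw [h.2.1, sum_const, card_univ, Fintype.card_fin, nsmul_one] at this
  exact absurd (Nat.cast_le.1 this) (by omega)

def intParts (N k ℓ : ℕ) : Set (Fin N → ℕ) :=
  {m | (∀ t : Fin N, ℓ ≤ t → m t = 0) ∧ ∑ t, m t + ℓ = k}

theorem isAtomicSplit_ceil_iff {lam : Fin N → ℝ} {k ℓ : ℕ} {m : Fin N → ℕ}
    (hsum : ∑ t, lam t = k) :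
    IsAtomicSplit (Nat.ceil ∘ lam) k ℓ m ↔
      IsAtomic ℓ (fun t => lam t - m t) ∧ m ∈ intParts N k ℓ := by
  have hsub : ∑ t, (lam t - m t) = ℓ ↔ ∑ t, m t + ℓ = k := by
    rw [sum_sub_distrib, hsum, sub_eq_iff_eq_add, ← Nat.cast_sum, ← Nat.cast_add, add_comm,
      Nat.cast_inj, eq_comm]
  have hceil (t : Fin N) : m t + 1 = ⌈lam t⌉₊ ↔ (m t : ℝ) < lam t ∧ lam t ≤ m t + 1 := by
    rw [eq_comm, Nat.ceil_eq_iff (by omega)]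
    push_cast
    simp
  constructor
  · intro h
    refine ⟨⟨fun t => sub_pos.2 (Nat.lt_ceil.1 (h.lt t)), hsub.2 h.sum_add, fun t ht => ?_⟩,
      h.eq_zero, h.sum_add⟩
    linarith [((hceil t).1 (h.succ_eq t ht)).2]
  · rintro ⟨⟨hpos, -, hle⟩, hzero, hsum⟩
    refine ⟨fun t => Nat.lt_ceil.2 (sub_pos.1 (hpos t)), fun t ht => ?_, hzero, hsum⟩
    exact (hceil t).2 ⟨sub_pos.1 (hpos t), by linarith [hle t ht]⟩

theorem finite_intParts (k ℓ : ℕ) : (intParts N k ℓ).Finite :=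
  (Set.finite_Iic fun _ => k).subset fun m hm t =>
    show m t ≤ k from (single_le_sum (fun _ _ => Nat.zero_le _) (mem_univ t)).trans
      (by have := hm.2; omega)

theorem ncard_intParts_succ (K : ℕ) (i : Fin N) :
    (intParts N (K + 1) (i + 1)).ncard = K.choose i := by
  by_cases hiK : (i : ℕ) ≤ K
  · have : intParts N (K + 1) (i + 1) = piAntidiag {t : Fin N | (t : ℕ) < i + 1} (K - i) := by
      ext m
      simp only [intParts, Set.mem_ofPred_eq, mem_coe, mem_piAntidiag, mem_filter_univ]
      constructor
      · rintro ⟨hzero, hsum⟩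
        have hsupp (t : Fin N) (ht : m t ≠ 0) : (t : ℕ) < i + 1 := by
          by_contra h
          exact ht (hzero t (by omega))
        rw [sum_filter_of_ne fun t _ => hsupp t]
        exact ⟨by omega, hsupp⟩
      · rintro ⟨hsum, hsupp⟩
        rw [sum_filter_of_ne fun t _ => hsupp t] at hsum
        refine ⟨fun t ht => ?_, by omega⟩
        by_contra h
        have := hsupp t h
        omega
    rw [this, Set.ncard_coe_finset, card_piAntidiag_nat, Fin.card_filter_val_lt,
      min_eq_right i.isLt, ← Nat.choose_symm hiK]
    congr 1
    omega
  · rw [Nat.choose_eq_zero_of_lt (by omega), Set.ncard_eq_zero (finite_intParts _ _) |>.2]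
    refine Set.eq_empty_of_forall_notMem fun m hm => ?_
    have := hm.2
    omega

end Atomic

section Lattice

variable {N n : ℕ} (v : Fin N → Fin n → ℤ)

noncomputable def vertexComb : (Fin N → ℝ) →ₗ[ℝ] Fin n → ℝ :=
  Fintype.linearCombination ℝ fun t j => (v t j : ℝ)

@[simp]
theorem vertexComb_apply (lam : Fin N → ℝ) (j : Fin n) :
    vertexComb v lam j = ∑ t, lam t * v t j := by
  simp [vertexComb, Fintype.linearCombination_apply]

def IsLatticeCoeff (lam : Fin N → ℝ) : Prop :=
  ∃ x : Fin n → ℤ, ((↑) ∘ x : Fin n → ℝ) = vertexComb v lam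

def latticeCoeffs (k : ℕ) : Set (Fin N → ℝ) :=
  {lam | (∀ t, 0 < lam t) ∧ ∑ t, lam t = k ∧ IsLatticeCoeff v lam}

def atomicCoeffs (ℓ : ℕ) : Set (Fin N → ℝ) :=
  {μ | IsAtomic ℓ μ ∧ IsLatticeCoeff v μ}

variable {v}

theorem isLatticeCoeff_add_natCast_iff (lam : Fin N → ℝ) (m : Fin N → ℕ) :
    IsLatticeCoeff v (fun t => lam t + m t) ↔ IsLatticeCoeff v lam := by
  have hshift : vertexComb v (fun t => lam t + m t) =
      vertexComb v lam + ((↑) ∘ ∑ t, m t • v t : Fin n → ℝ) := by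
    ext j
    simp [add_mul, sum_add_distrib]
  constructor
  · rintro ⟨x, hx⟩
    refine ⟨x - ∑ t, m t • v t, ?_⟩
    rw [hshift] at hx
    ext j
    simpa [sub_eq_iff_eq_add] using congrFun hx j
  · rintro ⟨x, hx⟩
    refine ⟨x + ∑ t, m t • v t, ?_⟩
    rw [hshift, ← hx]
    ext j
    simp

theorem vertexComb_injOn (hv : AffineIndependent ℝ fun i => fun j => ((v i j : ℝ))) (s : ℝ) :
    Set.InjOn (vertexComb v) {lam | ∑ t, lam t = s} := fun lam h lam' h' he =>
  funext fun t => hv.eq_of_sum_eq_sum (h.trans h'.symm)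
    (by simpa [vertexComb, Fintype.linearCombination_apply] using he) t (mem_univ t)

theorem finite_latticeCoeffs (hv : AffineIndependent ℝ fun i => fun j => ((v i j : ℝ)))
    (k : ℕ) : (latticeCoeffs v k).Finite := by
  set K := vertexComb v '' Set.Icc 0 fun _ => (k : ℝ)
  have hK : IsCompact K := isCompact_Icc.image (vertexComb v).continuous_of_finiteDimensional
  have hX : {x : Fin n → ℤ | ((↑) ∘ x : Fin n → ℝ) ∈ K}.Finite :=
    ((Topology.IsClosedEmbedding.piMap fun _ => Int.isClosedEmbedding_coe_real).isCompact_preimage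
      hK).finite_of_discrete
  refine Set.Finite.of_finite_image ((hX.image fun x => ((↑) ∘ x : Fin n → ℝ)).subset ?_)
    ((vertexComb_injOn hv k).mono fun _ h => h.2.1)
  rintro _ ⟨lam, ⟨hpos, hsum, x, hx⟩, rfl⟩
  refine ⟨x, ⟨lam, ⟨fun t => (hpos t).le, fun t => ?_⟩, hx.symm⟩, hx⟩
  rw [← hsum]
  exact single_le_sum (fun t _ => (hpos t).le) (mem_univ t)

theorem atomicCoeffs_subset (ℓ : ℕ) : atomicCoeffs v ℓ ⊆ latticeCoeffs v ℓ :=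
  fun _ h => ⟨h.1.1, h.1.2.1, h.2⟩

theorem atomicCoeffs_eq_empty {ℓ : ℕ} (hℓ : N < ℓ) : atomicCoeffs v ℓ = ∅ :=
  Set.eq_empty_of_forall_notMem fun _ hμ => absurd hμ.1.level_le (by omega)

end Lattice

section Decomposition

variable {N n : ℕ} {v : Fin N → Fin n → ℤ} {k : ℕ}

theorem add_mem_latticeCoeffs {ℓ : ℕ} {μ : Fin N → ℝ} {m : Fin N → ℕ}
    (hμ : μ ∈ atomicCoeffs v ℓ) (hm : m ∈ intParts N k ℓ) :
    (fun t => μ t + m t) ∈ latticeCoeffs v k := by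
  obtain ⟨⟨hpos, hsum, -⟩, hlat⟩ := hμ
  refine ⟨fun t => add_pos_of_pos_of_nonneg (hpos t) (m t).cast_nonneg, ?_,
    (isLatticeCoeff_add_natCast_iff μ m).2 hlat⟩
  rw [sum_add_distrib, hsum, ← Nat.cast_sum, ← Nat.cast_add, ← hm.2, add_comm]

theorem isAtomicSplit_of_add {ℓ : ℕ} {μ : Fin N → ℝ} {m : Fin N → ℕ}
    (hμ : μ ∈ atomicCoeffs v ℓ) (hm : m ∈ intParts N k ℓ) :
    IsAtomicSplit (Nat.ceil ∘ fun t => μ t + m t) k ℓ m :=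
  (isAtomicSplit_ceil_iff (add_mem_latticeCoeffs hμ hm).2.1).2 ⟨by simpa using hμ.1, hm⟩

def addIntPart (p : Σ i : Fin N, atomicCoeffs v (i + 1) × intParts N k (i + 1)) :
    latticeCoeffs v k :=
  ⟨_, add_mem_latticeCoeffs p.2.1.2 p.2.2.2⟩

theorem addIntPart_injective : Function.Injective (addIntPart (v := v) (k := k)) := by
  rintro ⟨i, ⟨μ, hμ⟩, ⟨m, hm⟩⟩ ⟨i', ⟨μ', hμ'⟩, ⟨m', hm'⟩⟩ he
  have hadd : (fun t => μ t + m t) = fun t => μ' t + m' t := congrArg Subtype.val he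
  have h₁ := isAtomicSplit_of_add hμ hm
  have h₂ := isAtomicSplit_of_add hμ' hm'
  rw [← hadd] at h₂
  obtain rfl : i = i' := Fin.ext (by have := h₁.level_eq h₂; omega)
  obtain rfl : m = m' := h₁.eq h₂
  obtain rfl : μ = μ' := funext fun t => by simpa using congrFun hadd t
  rfl

theorem addIntPart_surjective (hk : 0 < k) :
    Function.Surjective (addIntPart (v := v) (k := k)) := by
  rintro ⟨lam, hpos, hsum, hlat⟩
  have hceil : k ≤ ∑ t, ⌈lam t⌉₊ := by
    rw [← Nat.cast_le (α := ℝ), ← hsum, Nat.cast_sum]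
    exact sum_le_sum fun t _ => Nat.le_ceil (lam t)
  obtain ⟨i, m, hsplit⟩ := exists_isAtomicSplit _ (fun t => Nat.ceil_pos.2 (hpos t)) hk hceil
  obtain ⟨hμ, hm⟩ := (isAtomicSplit_ceil_iff hsum).1 hsplit
  have hμlat : IsLatticeCoeff v fun t => lam t - m t :=
    (isLatticeCoeff_add_natCast_iff _ m).1 (by simpa using hlat)
  exact ⟨⟨i, ⟨_, hμ, hμlat⟩, ⟨m, hm⟩⟩, Subtype.ext (funext fun t => sub_add_cancel _ _)⟩

theorem ncard_latticeCoeffs_succ (hv : AffineIndependent ℝ fun i => fun j => ((v i j : ℝ)))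
    (K : ℕ) {M : ℕ} (hM : N ≤ M) :
    (latticeCoeffs v (K + 1)).ncard =
      ∑ i ∈ range M, (atomicCoeffs v (i + 1)).ncard * K.choose i := by
  have (i : Fin N) : Finite (atomicCoeffs v (i + 1)) :=
    ((finite_latticeCoeffs hv _).subset (atomicCoeffs_subset _)).to_subtype
  have (i : Fin N) : Finite (intParts N (K + 1) (i + 1)) := (finite_intParts _ _).to_subtype
  have hbij := Equiv.ofBijective (addIntPart (v := v) (k := K + 1))
    ⟨addIntPart_injective, addIntPart_surjective K.succ_pos⟩
  rw [← Nat.card_coe_set_eq, ← Nat.card_congr hbij, Nat.card_sigma]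
  simp_rw [Nat.card_prod, Nat.card_coe_set_eq, ncard_intParts_succ]
  rw [Fin.sum_univ_eq_sum_range (fun i => (atomicCoeffs v (i + 1)).ncard * K.choose i),
    ← sum_range_add_sum_Ico _ hM, left_eq_add]
  refine sum_eq_zero fun i hi => ?_
  rw [atomicCoeffs_eq_empty (by rw [mem_Ico] at hi; omega), Set.ncard_empty, zero_mul]

end Decomposition

theorem ncard_latticePoints {N n : ℕ} {v : Fin N → Fin n → ℤ}
    (hv : AffineIndependent ℝ fun i => fun j => ((v i j : ℝ))) (k : ℕ) :
    {x : Fin n → ℤ | ∃ lam : Fin N → ℝ, (∀ t, 0 < lam t) ∧ (∑ t, lam t) = (k : ℝ) ∧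
      ∀ j : Fin n, (x j : ℝ) = ∑ t, lam t * (v t j : ℝ)}.ncard = (latticeCoeffs v k).ncard := by
  calc _ = {x : Fin n → ℤ | ∃ lam ∈ {lam : Fin N → ℝ | (∀ t, 0 < lam t) ∧ ∑ t, lam t = k},
          ((↑) ∘ x : Fin n → ℝ) = vertexComb v lam}.ncard := by
        congr 1
        ext x
        simp [funext_iff, and_assoc]
    _ = _ := by
        rw [Set.ncard_setOf_exists_eq (Int.cast_injective.comp_left)
          ((vertexComb_injOn hv k).mono fun _ h => h.2)]
        simp [latticeCoeffs, IsLatticeCoeff, and_assoc]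

theorem isAtomic_succ_iff_of_sum_eq_intCast {d i : ℕ} {lam : Fin (d + 1) → ℝ} {s : ℤ}
    (hs : ∑ t, lam t = s) :
    IsAtomic (i + 1) lam ↔ (∀ t, 0 < lam t) ∧ (∑ t, lam t ≤ (d : ℝ) + 1) ∧
      ⌈∑ t, lam t⌉ = (i : ℤ) + 1 ∧
      ∀ j : Fin (d + 1), ((j : ℕ) + 1 : ℤ) < ⌈∑ t, lam t⌉ → lam j ≤ 1 := by
  constructor
  · intro hat
    have hceil : ⌈∑ t, lam t⌉ = (i : ℤ) + 1 := by
      rw [hat.2.1]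
      exact_mod_cast Int.ceil_natCast (i + 1)
    refine ⟨hat.1, ?_, hceil, fun j hj => hat.2.2 j (by omega)⟩
    rw [hat.2.1]
    exact_mod_cast hat.level_le
  · rintro ⟨hpos, -, hceil, hle⟩
    rw [hs, Int.ceil_intCast] at hceil
    refine ⟨hpos, by rw [hs, hceil]; push_cast; ring, fun j hj => hle j ?_⟩
    rw [hs, Int.ceil_intCast, hceil]
    omega

theorem ncard_atomicPoints {d n : ℕ} {v : Fin (d + 1) → Fin n → ℤ}
    (hv : AffineIndependent ℝ fun i => fun j => ((v i j : ℝ))) (i : ℕ) :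
    {z : Fin (n + 1) → ℤ | ∃ lam : Fin (d + 1) → ℝ,
        (∀ t, 0 < lam t) ∧ (∑ t, lam t ≤ (d : ℝ) + 1) ∧
        ⌈∑ t, lam t⌉ = (i : ℤ) + 1 ∧
        (∀ j : Fin (d + 1), ((j : ℕ) + 1 : ℤ) < ⌈∑ t, lam t⌉ → lam j ≤ 1) ∧
        (∀ j : Fin n, (z (Fin.castSucc j) : ℝ) = ∑ t, lam t * (v t j : ℝ)) ∧
        ((z (Fin.last n) : ℝ) = ∑ t, lam t)}.ncard = (atomicCoeffs v (i + 1)).ncard := by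
  set g : (Fin (d + 1) → ℝ) → Fin (n + 1) → ℝ := fun lam =>
    Fin.snoc (vertexComb v lam) ((i : ℝ) + 1)
  have hg (z : Fin (n + 1) → ℤ) (lam : Fin (d + 1) → ℝ) : ((↑) ∘ z : Fin (n + 1) → ℝ) = g lam ↔
      (∀ j : Fin n, (z (Fin.castSucc j) : ℝ) = ∑ t, lam t * (v t j : ℝ)) ∧
        (z (Fin.last n) : ℝ) = i + 1 := by
    rw [funext_iff, Fin.forall_fin_succ']
    simp [g]
  have hinj : Set.InjOn g {μ | IsAtomic (i + 1) μ} := fun lam h lam' h' he =>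
    vertexComb_injOn hv ((i + 1 : ℕ) : ℝ) h.2.1 h'.2.1 (by simpa [g] using congrArg Fin.init he)
  calc _ = {z : Fin (n + 1) → ℤ | ∃ lam ∈ {μ | IsAtomic (i + 1) μ}, (↑) ∘ z = g lam}.ncard := by
        congr 1
        ext z
        simp only [Set.mem_ofPred_eq, hg]
        refine exists_congr fun lam => ⟨?_, ?_⟩
        · rintro ⟨hpos, hle, hceil, hat, hz, hlast⟩
          have hat := (isAtomic_succ_iff_of_sum_eq_intCast hlast.symm).2 ⟨hpos, hle, hceil, hat⟩
          exact ⟨hat, hz, by rw [hlast, hat.2.1]; push_cast; ring⟩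
        · rintro ⟨hat, hz, hlast⟩
          have hsum : ∑ t, lam t = z (Fin.last n) := by rw [hlast, hat.2.1]; push_cast; ring
          obtain ⟨hpos, hle, hceil, hat⟩ := (isAtomic_succ_iff_of_sum_eq_intCast hsum).1 hat
          exact ⟨hpos, hle, hceil, hat, hz, hsum.symm⟩
    _ = _ := by
        rw [Set.ncard_setOf_exists_eq (Int.cast_injective.comp_left) hinj]
        congr 1
        ext μ
        refine and_congr_right fun _ => ⟨fun ⟨z, hz⟩ => ⟨Fin.init z, ?_⟩,
          fun ⟨x, hx⟩ => ⟨Fin.snoc x (i + 1), ?_⟩⟩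
        · ext j
          simpa [Fin.init, g] using congrFun hz j.castSucc
        · rw [Fin.comp_snoc, hx]
          push_cast
          rfl

end LatticeSimplex

open LatticeSimplex in
/-- Counting interpretation of the `f*`-vector of an open lattice simplex: if `Δ` is the
relative interior of the `d`-dimensional lattice simplex with vertices
`v 0, …, v d ∈ ℤ^n` and `f` is the `f*`-vector of its Ehrhart polynomial with respect to
any `d' ≥ d`, then `f i` is the number of atomic lattice points at level `i + 1` in the
half-open fundamental simplex of the cone over `Δ × {1}`.  (In particular `f i = 0` for
`i > d`.) -/
theorem fstar_counts_atomic_points (d n d' : ℕ) (hd' : d ≤ d')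
    (v : Fin (d + 1) → Fin n → ℤ)
    (hv : AffineIndependent ℝ fun i => fun j => ((v i j : ℝ)))
    (L : ℕ → ℕ)
    (hL : ∀ k : ℕ, L k = Set.ncard {x : Fin n → ℤ | ∃ lam : Fin (d + 1) → ℝ,
      (∀ t, 0 < lam t) ∧ (∑ t, lam t) = (k : ℝ) ∧
      ∀ j : Fin n, (x j : ℝ) = ∑ t, lam t * (v t j : ℝ)})
    (f : ℕ → ℚ)
    (hf : ∀ k : ℕ, 1 ≤ k →
      (L k : ℚ) = ∑ i ∈ Finset.range (d' + 1), f i * (binomDesc i).eval (k : ℚ)) :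
    ∀ i : ℕ, i ≤ d' →
      f i = Set.ncard {z : Fin (n + 1) → ℤ | ∃ lam : Fin (d + 1) → ℝ,
        (∀ t, 0 < lam t) ∧ (∑ t, lam t ≤ (d : ℝ) + 1) ∧
        ⌈∑ t, lam t⌉ = (i : ℤ) + 1 ∧
        (∀ j : Fin (d + 1), ((j : ℕ) + 1 : ℤ) < ⌈∑ t, lam t⌉ → lam j ≤ 1) ∧
        (∀ j : Fin n, (z (Fin.castSucc j) : ℝ) = ∑ t, lam t * (v t j : ℝ)) ∧
        ((z (Fin.last n) : ℝ) = ∑ t, lam t)} := by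
  intro i hi
  rw [ncard_atomicPoints hv i]
  refine eq_of_forall_sum_mul_choose_eq (M := d' + 1)
    (b := fun i => ((atomicCoeffs v (i + 1)).ncard : ℚ)) (fun K => ?_) i (by omega)
  have hK := hf (K + 1) (by omega)
  rw [hL, ncard_latticePoints hv, ncard_latticeCoeffs_succ hv K (by omega : d + 1 ≤ d' + 1)]
    at hK
  simp only [eval_binomDesc_natCast_succ] at hK
  exact_mod_cast hK.symm
end
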